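/- For all x, y ∈ U^ev, the element Σ ad_{S(R₁)}(y) ⊗ ad_{R₂}(x) of U_ζ ⊗ U_ζ — that is, the image of the R-matrix R = Σ R₁ ⊗ R₂ under the ℂ-linear map determined by a⊗b ↦ ad_{S(a)}(y) ⊗ ad_b(x) — lies in U^ev ⊗ U^ev. -/

import Mathlib

open scoped TensorProduct

noncomputable section
namespace RestrictedQsl2

inductive Gen : Type | E | F | K | Kinv

abbrev FA : Type := FreeAlgebra ℂ Gen

/-- `t = exp(πi/ℓ)`. -/
def tval (ℓ : ℕ) : ℂ := Complex.exp (Real.pi * Complex.I / ℓ)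

/-- `s = exp(πi/(2ℓ))`, so `s² = t`. -/
def sval (ℓ : ℕ) : ℂ := Complex.exp (Real.pi * Complex.I / (2 * ℓ))

/-- Defining relations of the restricted quantum group `U_ζ(sl₂)`. -/
inductive Rel (ℓ : ℕ) : FA → FA → Prop
  | KKinv : Rel ℓ (FreeAlgebra.ι ℂ Gen.K * FreeAlgebra.ι ℂ Gen.Kinv) 1
  | KinvK : Rel ℓ (FreeAlgebra.ι ℂ Gen.Kinv * FreeAlgebra.ι ℂ Gen.K) 1
  | KE : Rel ℓ (FreeAlgebra.ι ℂ Gen.K * FreeAlgebra.ι ℂ Gen.E)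
      (tval ℓ • (FreeAlgebra.ι ℂ Gen.E * FreeAlgebra.ι ℂ Gen.K))
  | KF : Rel ℓ (FreeAlgebra.ι ℂ Gen.K * FreeAlgebra.ι ℂ Gen.F)
      ((tval ℓ)⁻¹ • (FreeAlgebra.ι ℂ Gen.F * FreeAlgebra.ι ℂ Gen.K))
  | EF : Rel ℓ
      (FreeAlgebra.ι ℂ Gen.E * FreeAlgebra.ι ℂ Gen.F -
        FreeAlgebra.ι ℂ Gen.F * FreeAlgebra.ι ℂ Gen.E)
      ((tval ℓ - (tval ℓ)⁻¹)⁻¹ • (FreeAlgebra.ι ℂ Gen.K ^ 2 - FreeAlgebra.ι ℂ Gen.Kinv ^ 2))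
  | Epow : Rel ℓ (FreeAlgebra.ι ℂ Gen.E ^ ℓ) 0
  | Fpow : Rel ℓ (FreeAlgebra.ι ℂ Gen.F ^ ℓ) 0
  | Kpow : Rel ℓ (FreeAlgebra.ι ℂ Gen.K ^ (4 * ℓ)) 1

/-- The restricted quantum group `U_ζ(sl₂)`. -/
abbrev Uq (ℓ : ℕ) : Type := RingQuot (Rel ℓ)

def gE (ℓ : ℕ) : Uq ℓ := RingQuot.mkAlgHom ℂ (Rel ℓ) (FreeAlgebra.ι ℂ Gen.E)
def gF (ℓ : ℕ) : Uq ℓ := RingQuot.mkAlgHom ℂ (Rel ℓ) (FreeAlgebra.ι ℂ Gen.F)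
def gK (ℓ : ℕ) : Uq ℓ := RingQuot.mkAlgHom ℂ (Rel ℓ) (FreeAlgebra.ι ℂ Gen.K)
def gKinv (ℓ : ℕ) : Uq ℓ := RingQuot.mkAlgHom ℂ (Rel ℓ) (FreeAlgebra.ι ℂ Gen.Kinv)

/-- The Casimir element `C = FE + (K²t + K⁻²t⁻¹)/(t-t⁻¹)²`. -/
def Cas (ℓ : ℕ) : Uq ℓ :=
  gF ℓ * gE ℓ +
    ((tval ℓ - (tval ℓ)⁻¹) ^ 2)⁻¹ • (tval ℓ • gK ℓ ^ 2 + (tval ℓ)⁻¹ • gKinv ℓ ^ 2)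

/-- Quantum integer `[n]`. -/
def qint (ℓ n : ℕ) : ℂ := (tval ℓ ^ n - (tval ℓ)⁻¹ ^ n) / (tval ℓ - (tval ℓ)⁻¹)

/-- Quantum factorial `[n]!`. -/
def qfact (ℓ n : ℕ) : ℂ := ∏ k ∈ Finset.range n, qint ℓ (k + 1)

/-- The diagonal part `D` of the universal `R`-matrix. -/
def Dmat (ℓ : ℕ) : Uq ℓ ⊗[ℂ] Uq ℓ :=
  ((4 * ℓ : ℂ))⁻¹ • ∑ m ∈ Finset.range (4 * ℓ), ∑ n ∈ Finset.range (4 * ℓ),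
    (sval ℓ ^ (-(m * n : ℤ))) • ((gK ℓ ^ m) ⊗ₜ[ℂ] (gK ℓ ^ n))

/-- The universal `R`-matrix. -/
def Rmat (ℓ : ℕ) : Uq ℓ ⊗[ℂ] Uq ℓ :=
  Dmat ℓ * ∑ n ∈ Finset.range ℓ,
    (((tval ℓ - (tval ℓ)⁻¹) ^ n / qfact ℓ n) * tval ℓ ^ (n * (n - 1) / 2)) •
      ((gE ℓ ^ n) ⊗ₜ[ℂ] (gF ℓ ^ n))

/-- The even subalgebra `U^ev`, generated by `E`, `F`, `K²`, `K⁻²`. -/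
def Uev (ℓ : ℕ) : Subalgebra ℂ (Uq ℓ) :=
  Algebra.adjoin ℂ {gE ℓ, gF ℓ, gK ℓ ^ 2, gKinv ℓ ^ 2}

/-- The image of `U^ev ⊗ U^ev` in `U_ζ ⊗ U_ζ`. -/
def UevT (ℓ : ℕ) : Submodule ℂ (Uq ℓ ⊗[ℂ] Uq ℓ) :=
  LinearMap.range
    (TensorProduct.map (Subalgebra.toSubmodule (Uev ℓ)).subtype
      (Subalgebra.toSubmodule (Uev ℓ)).subtype)

/-- The adjoint action, as a linear map `x ⊗ r ↦ ad_r(x) = Σ r′ x S(r″)`. -/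
def adMap (ℓ : ℕ) (Δ : Uq ℓ →ₐ[ℂ] Uq ℓ ⊗[ℂ] Uq ℓ) (S : Uq ℓ →ₗ[ℂ] Uq ℓ) :
    Uq ℓ ⊗[ℂ] Uq ℓ →ₗ[ℂ] Uq ℓ :=
  LinearMap.mul' ℂ (Uq ℓ) ∘ₗ
    TensorProduct.map LinearMap.id (LinearMap.mul' ℂ (Uq ℓ)) ∘ₗ
    (TensorProduct.leftComm ℂ (Uq ℓ) (Uq ℓ) (Uq ℓ)).toLinearMap ∘ₗ
    TensorProduct.map LinearMap.id (TensorProduct.map LinearMap.id S) ∘ₗ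
    TensorProduct.map LinearMap.id Δ.toLinearMap

/-- `adL y : a ↦ ad_a(y)`, linear in `a`. -/
def adL (ℓ : ℕ) (Δ : Uq ℓ →ₐ[ℂ] Uq ℓ ⊗[ℂ] Uq ℓ) (S : Uq ℓ →ₗ[ℂ] Uq ℓ) (y : Uq ℓ) :
    Uq ℓ →ₗ[ℂ] Uq ℓ :=
  adMap ℓ Δ S ∘ₗ TensorProduct.mk ℂ (Uq ℓ) (Uq ℓ) y

/-!
`U^ev` is stable under the adjoint action of all of `U_ζ`. Since `ad` is an action
(`S` is an anti-homomorphism), it suffices to check the generators: `ad_E` and `ad_F` only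
multiply by `E`, `F`, `K^{±2}`, while `ad_{K^{±1}}` is conjugation, which rescales `E` and `F`
by `t^{±1}` and fixes `K^{±2}`. Hence both legs of the map send every tensor, in particular `R`
(whose factor `D` has odd powers of `K` outside `U^ev`), into `U^ev ⊗ U^ev`.
-/

section Sandwich

variable {R A : Type*} [CommSemiring R] [Semiring A] [Algebra R A]

/-- Applied to `Δ r`, this is the adjoint action `ad_r(y)`. -/
def sandwich (S : A →ₗ[R] A) (y : A) : A ⊗[R] A →ₗ[R] A :=
  LinearMap.mul' R A ∘ₗ TensorProduct.map (LinearMap.mulRight R y) S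

variable (S : A →ₗ[R] A)

@[simp]
lemma sandwich_tmul (y a b : A) : sandwich S y (a ⊗ₜ[R] b) = a * y * S b := rfl

lemma sandwich_mul (hSmul : ∀ a b : A, S (a * b) = S b * S a) (y : A) (z w : A ⊗[R] A) :
    sandwich S y (z * w) = sandwich S (sandwich S y w) z := by
  induction z generalizing w with
  | zero => simp
  | add z₁ z₂ h₁ h₂ => rw [add_mul, map_add, map_add, h₁, h₂]
  | tmul a c =>
    induction w with
    | zero => simp
    | add w₁ w₂ h₁ h₂ => simp only [mul_add, map_add, h₁, h₂, sandwich_tmul, add_mul]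
    | tmul b d => simp only [Algebra.TensorProduct.tmul_mul_tmul, sandwich_tmul, hSmul, mul_assoc]

/-- The elements `r` whose adjoint action preserves `B` form a subalgebra. -/
lemma sandwich_mem_of_adjoin_eq_top {s : Set A} (hs : Algebra.adjoin R s = ⊤)
    (B : Subalgebra R A) (Δ : A →ₐ[R] A ⊗[R] A)
    (hS1 : S 1 = 1) (hSmul : ∀ a b : A, S (a * b) = S b * S a)
    (hgen : ∀ r ∈ s, ∀ y ∈ B, sandwich S y (Δ r) ∈ B) (r : A) {y : A} (hy : y ∈ B) :
    sandwich S y (Δ r) ∈ B := by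
  have hr : r ∈ Algebra.adjoin R s := hs ▸ Algebra.mem_top
  induction hr using Algebra.adjoin_induction generalizing y with
  | mem r hr => exact hgen r hr y hy
  | algebraMap c =>
    rw [AlgHom.commutes, Algebra.TensorProduct.algebraMap_apply, sandwich_tmul, hS1, mul_one,
      ← Algebra.smul_def]
    exact B.smul_mem hy c
  | add a b _ _ ha hb => rw [map_add, map_add]; exact add_mem (ha hy) (hb hy)
  | mul a b _ _ ha hb => rw [map_mul, sandwich_mul S hSmul]; exact ha (hb hy)

end Sandwich

lemma conj_mem_adjoin {R A : Type*} [CommSemiring R] [Semiring A] [Algebra R A] {s : Set A}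
    (u : Aˣ) (hs : ∀ a ∈ s, ↑u * a * ↑u⁻¹ ∈ Algebra.adjoin R s) {y : A}
    (hy : y ∈ Algebra.adjoin R s) : ↑u * y * ↑u⁻¹ ∈ Algebra.adjoin R s := by
  let φ := MulSemiringAction.toAlgHom R A (ConjAct.toConjAct u)
  have hle : Algebra.adjoin R s ≤ (Algebra.adjoin R s).comap φ :=
    Algebra.adjoin_le fun a ha => by simpa [φ, ConjAct.units_smul_def] using hs a ha
  simpa [φ, ConjAct.units_smul_def] using hle hy

lemma tensorMap_mem_range_map_subtype {R M N P Q : Type*} [CommSemiring R]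
    [AddCommMonoid M] [AddCommMonoid N] [AddCommMonoid P] [AddCommMonoid Q]
    [Module R M] [Module R N] [Module R P] [Module R Q]
    {p : Submodule R P} {q : Submodule R Q} {f : M →ₗ[R] P} {g : N →ₗ[R] Q}
    (hf : ∀ m, f m ∈ p) (hg : ∀ n, g n ∈ q) (z : M ⊗[R] N) :
    TensorProduct.map f g z ∈ LinearMap.range (TensorProduct.map p.subtype q.subtype) :=
  ⟨TensorProduct.map (f.codRestrict p hf) (g.codRestrict q hg) z, by
    rw [← LinearMap.comp_apply, ← TensorProduct.map_comp]; rfl⟩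

section Generators

variable (ℓ : ℕ)

lemma gK_mul_gKinv : gK ℓ * gKinv ℓ = 1 := by
  simpa [gK, gKinv] using RingQuot.mkAlgHom_rel ℂ (Rel.KKinv (ℓ := ℓ))

lemma gKinv_mul_gK : gKinv ℓ * gK ℓ = 1 := by
  simpa [gK, gKinv] using RingQuot.mkAlgHom_rel ℂ (Rel.KinvK (ℓ := ℓ))

lemma gK_mul_gE : gK ℓ * gE ℓ = tval ℓ • (gE ℓ * gK ℓ) := by
  simpa [gK, gE] using RingQuot.mkAlgHom_rel ℂ (Rel.KE (ℓ := ℓ))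

lemma gK_mul_gF : gK ℓ * gF ℓ = (tval ℓ)⁻¹ • (gF ℓ * gK ℓ) := by
  simpa [gK, gF] using RingQuot.mkAlgHom_rel ℂ (Rel.KF (ℓ := ℓ))

lemma tval_ne_zero : tval ℓ ≠ 0 := Complex.exp_ne_zero _

def unitK : (Uq ℓ)ˣ := ⟨gK ℓ, gKinv ℓ, gK_mul_gKinv ℓ, gKinv_mul_gK ℓ⟩

lemma adjoin_generators_eq_top :
    Algebra.adjoin ℂ ({gE ℓ, gF ℓ, gK ℓ, gKinv ℓ} : Set (Uq ℓ)) = ⊤ := by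
  have himg : RingQuot.mkAlgHom ℂ (Rel ℓ) '' Set.range (FreeAlgebra.ι ℂ (X := Gen)) =
      {gE ℓ, gF ℓ, gK ℓ, gKinv ℓ} := by
    ext z
    constructor
    · rintro ⟨_, ⟨g, rfl⟩, rfl⟩
      cases g <;> simp [gE, gF, gK, gKinv]
    · rintro (rfl | rfl | rfl | rfl) <;> exact ⟨_, ⟨_, rfl⟩, rfl⟩
  rw [← himg, ← AlgHom.map_adjoin, FreeAlgebra.adjoin_range_ι, Algebra.map_top,
    AlgHom.range_eq_top]
  exact RingQuot.mkAlgHom_surjective ℂ (Rel ℓ)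

lemma gE_mem_Uev : gE ℓ ∈ Uev ℓ := Algebra.subset_adjoin (by simp)
lemma gF_mem_Uev : gF ℓ ∈ Uev ℓ := Algebra.subset_adjoin (by simp)
lemma gK_sq_mem_Uev : gK ℓ ^ 2 ∈ Uev ℓ := Algebra.subset_adjoin (by simp)
lemma gKinv_sq_mem_Uev : gKinv ℓ ^ 2 ∈ Uev ℓ := Algebra.subset_adjoin (by simp)

end Generators

section Adjoint

variable (ℓ : ℕ)

lemma gE_mul_gK : gE ℓ * gK ℓ = (tval ℓ)⁻¹ • (gK ℓ * gE ℓ) := by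
  rw [gK_mul_gE, smul_smul, inv_mul_cancel₀ (tval_ne_zero ℓ), one_smul]

lemma gF_mul_gK : gF ℓ * gK ℓ = tval ℓ • (gK ℓ * gF ℓ) := by
  rw [gK_mul_gF, smul_smul, mul_inv_cancel₀ (tval_ne_zero ℓ), one_smul]

lemma commute_gK_gKinv : Commute (gK ℓ) (gKinv ℓ) :=
  (gK_mul_gKinv ℓ).trans (gKinv_mul_gK ℓ).symm

lemma conj_gK_mem_Uev {y : Uq ℓ} (hy : y ∈ Uev ℓ) : gK ℓ * y * gKinv ℓ ∈ Uev ℓ := by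
  refine conj_mem_adjoin (unitK ℓ) ?_ hy
  have hK : Commute (gK ℓ) (gK ℓ ^ 2) := Commute.self_pow _ 2
  have hKinv : Commute (gK ℓ) (gKinv ℓ ^ 2) := (commute_gK_gKinv ℓ).pow_right 2
  rintro a (rfl | rfl | rfl | rfl) <;> change gK ℓ * _ * gKinv ℓ ∈ Uev ℓ
  · rw [gK_mul_gE, smul_mul_assoc, mul_assoc, gK_mul_gKinv, mul_one]
    exact Subalgebra.smul_mem _ (gE_mem_Uev ℓ) _
  · rw [gK_mul_gF, smul_mul_assoc, mul_assoc, gK_mul_gKinv, mul_one]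
    exact Subalgebra.smul_mem _ (gF_mem_Uev ℓ) _
  · rw [hK.eq, mul_assoc, gK_mul_gKinv, mul_one]; exact gK_sq_mem_Uev ℓ
  · rw [hKinv.eq, mul_assoc, gK_mul_gKinv, mul_one]; exact gKinv_sq_mem_Uev ℓ

lemma conj_gKinv_mem_Uev {y : Uq ℓ} (hy : y ∈ Uev ℓ) : gKinv ℓ * y * gK ℓ ∈ Uev ℓ := by
  refine conj_mem_adjoin (unitK ℓ)⁻¹ ?_ hy
  have hK : Commute (gKinv ℓ) (gK ℓ ^ 2) := (commute_gK_gKinv ℓ).symm.pow_right 2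
  have hKinv : Commute (gKinv ℓ) (gKinv ℓ ^ 2) := Commute.self_pow _ 2
  rintro a (rfl | rfl | rfl | rfl) <;> change gKinv ℓ * _ * gK ℓ ∈ Uev ℓ
  · rw [mul_assoc, gE_mul_gK, mul_smul_comm, ← mul_assoc, gKinv_mul_gK, one_mul]
    exact Subalgebra.smul_mem _ (gE_mem_Uev ℓ) _
  · rw [mul_assoc, gF_mul_gK, mul_smul_comm, ← mul_assoc, gKinv_mul_gK, one_mul]
    exact Subalgebra.smul_mem _ (gF_mem_Uev ℓ) _
  · rw [hK.eq, mul_assoc, gKinv_mul_gK, mul_one]; exact gK_sq_mem_Uev ℓ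
  · rw [hKinv.eq, mul_assoc, gKinv_mul_gK, mul_one]; exact gKinv_sq_mem_Uev ℓ

lemma sandwich_comul_generator_mem_Uev (Δ : Uq ℓ →ₐ[ℂ] Uq ℓ ⊗[ℂ] Uq ℓ)
    (hΔK : Δ (gK ℓ) = gK ℓ ⊗ₜ[ℂ] gK ℓ)
    (hΔKinv : Δ (gKinv ℓ) = gKinv ℓ ⊗ₜ[ℂ] gKinv ℓ)
    (hΔE : Δ (gE ℓ) = 1 ⊗ₜ[ℂ] gE ℓ + gE ℓ ⊗ₜ[ℂ] (gK ℓ ^ 2))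
    (hΔF : Δ (gF ℓ) = gF ℓ ⊗ₜ[ℂ] 1 + (gKinv ℓ ^ 2) ⊗ₜ[ℂ] gF ℓ)
    (S : Uq ℓ →ₗ[ℂ] Uq ℓ)
    (hS1 : S 1 = 1) (hSmul : ∀ a b : Uq ℓ, S (a * b) = S b * S a)
    (hSK : S (gK ℓ) = gKinv ℓ) (hSKinv : S (gKinv ℓ) = gK ℓ)
    (hSE : S (gE ℓ) = -(gE ℓ * gKinv ℓ ^ 2)) (hSF : S (gF ℓ) = -(gK ℓ ^ 2 * gF ℓ)) :
    ∀ r ∈ ({gE ℓ, gF ℓ, gK ℓ, gKinv ℓ} : Set (Uq ℓ)), ∀ y ∈ Uev ℓ,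
      sandwich S y (Δ r) ∈ Uev ℓ := by
  have hSK2 : S (gK ℓ ^ 2) = gKinv ℓ ^ 2 := by rw [sq, hSmul, hSK, sq]
  have hE := gE_mem_Uev ℓ
  have hF := gF_mem_Uev ℓ
  have hK2 := gK_sq_mem_Uev ℓ
  have hKinv2 := gKinv_sq_mem_Uev ℓ
  rintro r (rfl | rfl | rfl | rfl) y hy
  · rw [hΔE, map_add, sandwich_tmul, sandwich_tmul, hSE, hSK2, one_mul]
    exact add_mem (mul_mem hy (neg_mem (mul_mem hE hKinv2))) (mul_mem (mul_mem hE hy) hKinv2)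
  · rw [hΔF, map_add, sandwich_tmul, sandwich_tmul, hS1, hSF, mul_one]
    exact add_mem (mul_mem hF hy) (mul_mem (mul_mem hKinv2 hy) (neg_mem (mul_mem hK2 hF)))
  · rw [hΔK, sandwich_tmul, hSK]; exact conj_gK_mem_Uev ℓ hy
  · rw [hΔKinv, sandwich_tmul, hSKinv]; exact conj_gKinv_mem_Uev ℓ hy

lemma adL_eq_sandwich (Δ : Uq ℓ →ₐ[ℂ] Uq ℓ ⊗[ℂ] Uq ℓ) (S : Uq ℓ →ₗ[ℂ] Uq ℓ) (y r : Uq ℓ) :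
    adL ℓ Δ S y r = sandwich S y (Δ r) := by
  simp only [adL, adMap, LinearMap.comp_apply, TensorProduct.mk_apply, TensorProduct.map_tmul,
    LinearMap.id_apply, AlgHom.toLinearMap_apply]
  induction Δ r with
  | zero => simp
  | tmul a b => simp [mul_assoc]
  | add u v hu hv => simp only [map_add, TensorProduct.tmul_add, hu, hv]

lemma adL_mem_Uev (Δ : Uq ℓ →ₐ[ℂ] Uq ℓ ⊗[ℂ] Uq ℓ)
    (hΔK : Δ (gK ℓ) = gK ℓ ⊗ₜ[ℂ] gK ℓ)
    (hΔKinv : Δ (gKinv ℓ) = gKinv ℓ ⊗ₜ[ℂ] gKinv ℓ)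
    (hΔE : Δ (gE ℓ) = 1 ⊗ₜ[ℂ] gE ℓ + gE ℓ ⊗ₜ[ℂ] (gK ℓ ^ 2))
    (hΔF : Δ (gF ℓ) = gF ℓ ⊗ₜ[ℂ] 1 + (gKinv ℓ ^ 2) ⊗ₜ[ℂ] gF ℓ)
    (S : Uq ℓ →ₗ[ℂ] Uq ℓ)
    (hS1 : S 1 = 1) (hSmul : ∀ a b : Uq ℓ, S (a * b) = S b * S a)
    (hSK : S (gK ℓ) = gKinv ℓ) (hSKinv : S (gKinv ℓ) = gK ℓ)
    (hSE : S (gE ℓ) = -(gE ℓ * gKinv ℓ ^ 2)) (hSF : S (gF ℓ) = -(gK ℓ ^ 2 * gF ℓ))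
    {y : Uq ℓ} (hy : y ∈ Uev ℓ) (r : Uq ℓ) : adL ℓ Δ S y r ∈ Uev ℓ := by
  rw [adL_eq_sandwich]
  exact sandwich_mem_of_adjoin_eq_top S (adjoin_generators_eq_top ℓ) (Uev ℓ) Δ hS1 hSmul
    (sandwich_comul_generator_mem_Uev ℓ Δ hΔK hΔKinv hΔE hΔF S hS1 hSmul hSK hSKinv hSE hSF) r hy

end Adjoint

theorem adSR1_tmul_adR2_mem_Uev_general (ℓ : ℕ)
    (Δ : Uq ℓ →ₐ[ℂ] Uq ℓ ⊗[ℂ] Uq ℓ)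
    (hΔK : Δ (gK ℓ) = gK ℓ ⊗ₜ[ℂ] gK ℓ)
    (hΔKinv : Δ (gKinv ℓ) = gKinv ℓ ⊗ₜ[ℂ] gKinv ℓ)
    (hΔE : Δ (gE ℓ) = 1 ⊗ₜ[ℂ] gE ℓ + gE ℓ ⊗ₜ[ℂ] (gK ℓ ^ 2))
    (hΔF : Δ (gF ℓ) = gF ℓ ⊗ₜ[ℂ] 1 + (gKinv ℓ ^ 2) ⊗ₜ[ℂ] gF ℓ)
    (S : Uq ℓ →ₗ[ℂ] Uq ℓ)
    (hS1 : S 1 = 1) (hSmul : ∀ a b : Uq ℓ, S (a * b) = S b * S a)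
    (hSK : S (gK ℓ) = gKinv ℓ) (hSKinv : S (gKinv ℓ) = gK ℓ)
    (hSE : S (gE ℓ) = -(gE ℓ * gKinv ℓ ^ 2)) (hSF : S (gF ℓ) = -(gK ℓ ^ 2 * gF ℓ))
    (x y : Uq ℓ) (hx : x ∈ Uev ℓ) (hy : y ∈ Uev ℓ) :
    TensorProduct.map (adL ℓ Δ S y ∘ₗ S) (adL ℓ Δ S x) (Rmat ℓ) ∈ UevT ℓ := by
  have hadL : ∀ {z}, z ∈ Uev ℓ → ∀ r, adL ℓ Δ S z r ∈ Uev ℓ :=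
    adL_mem_Uev ℓ Δ hΔK hΔKinv hΔE hΔF S hS1 hSmul hSK hSKinv hSE hSF
  exact tensorMap_mem_range_map_subtype (fun r => hadL hy (S r)) (hadL hx) (Rmat ℓ)

/-- For `x, y ∈ U^ev`, the element `Σ ad_{S(R₁)}(y) ⊗ ad_{R₂}(x)` of
`U_ζ ⊗ U_ζ` lies in `U^ev ⊗ U^ev`. -/
theorem adSR1_tmul_adR2_mem_Uev (ℓ : ℕ) (hℓ : 1 < ℓ)
    (Δ : Uq ℓ →ₐ[ℂ] Uq ℓ ⊗[ℂ] Uq ℓ)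
    (hΔK : Δ (gK ℓ) = gK ℓ ⊗ₜ[ℂ] gK ℓ)
    (hΔKinv : Δ (gKinv ℓ) = gKinv ℓ ⊗ₜ[ℂ] gKinv ℓ)
    (hΔE : Δ (gE ℓ) = 1 ⊗ₜ[ℂ] gE ℓ + gE ℓ ⊗ₜ[ℂ] (gK ℓ ^ 2))
    (hΔF : Δ (gF ℓ) = gF ℓ ⊗ₜ[ℂ] 1 + (gKinv ℓ ^ 2) ⊗ₜ[ℂ] gF ℓ)
    (S : Uq ℓ →ₗ[ℂ] Uq ℓ)
    (hS1 : S 1 = 1) (hSmul : ∀ a b : Uq ℓ, S (a * b) = S b * S a)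
    (hSK : S (gK ℓ) = gKinv ℓ) (hSKinv : S (gKinv ℓ) = gK ℓ)
    (hSE : S (gE ℓ) = -(gE ℓ * gKinv ℓ ^ 2)) (hSF : S (gF ℓ) = -(gK ℓ ^ 2 * gF ℓ))
    (x y : Uq ℓ) (hx : x ∈ Uev ℓ) (hy : y ∈ Uev ℓ) :
    TensorProduct.map (adL ℓ Δ S y ∘ₗ S) (adL ℓ Δ S x) (Rmat ℓ) ∈ UevT ℓ :=
  adSR1_tmul_adR2_mem_Uev_general ℓ Δ hΔK hΔKinv hΔE hΔF S hS1 hSmul hSK hSKinv hSE hSF x y hx hy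

end RestrictedQsl2
end
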